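/- Let θ̂(t,y) = b/a + (Δμ/(ad))[1 + (ε/y)(1 - e^{-δ(T-t)})/δ] with a, b, Δμ, d, ε > 0 and δ ∈ ℝ (interpreting (1-e^{-δs})/δ as s when δ = 0). Then for all 0 ≤ t < T and y > 0: ∂θ̂/∂y < 0 and ∂θ̂/∂t < 0. -/

import Mathlib

/-!
`θ̂` is an increasing affine function of `G(T - t)/y`, where `G(s) = (1 - e^{-δs})/δ`.
Since `G(T - t) > 0` for `t < T`, `θ̂` decreases in `y`; since `G' = e^{-δs} > 0`, it decreases in `t`.
-/

open Real

/-- The continuous annuity factor `∫₀ˢ e^{-δu} du`. -/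
noncomputable def annuityFactor (δ s : ℝ) : ℝ :=
  if δ = 0 then s else (1 - exp (-δ * s)) / δ

theorem annuityFactor_pos {δ s : ℝ} (hs : 0 < s) : 0 < annuityFactor δ s := by
  unfold annuityFactor
  split_ifs with hδ
  · exact hs
  · rcases lt_or_gt_of_ne hδ with hneg | hpos
    · have : 1 < exp (-δ * s) := one_lt_exp_iff.2 (by nlinarith)
      exact div_pos_of_neg_of_neg (by linarith) hneg
    · have : exp (-δ * s) < 1 := exp_lt_one_iff.2 (by nlinarith)
      exact div_pos (by linarith) hpos

theorem hasDerivAt_annuityFactor (δ s : ℝ) :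
    HasDerivAt (annuityFactor δ) (exp (-δ * s)) s := by
  by_cases hδ : δ = 0
  · have h : annuityFactor δ = id := funext fun s => if_pos hδ
    rw [h, hδ]
    simpa using hasDerivAt_id s
  · have h : annuityFactor δ = fun s => (1 - exp (-δ * s)) / δ := funext fun s => if_neg hδ
    rw [h]
    refine ((((hasDerivAt_id s).const_mul (-δ)).exp.const_sub 1).div_const δ).congr_deriv ?_
    field_simp
    simp

theorem stmt15_general (a b Δμ d ε T δ : ℝ)
    (ha : 0 < a) (hΔμ : 0 < Δμ) (hd : 0 < d) (hε : 0 < ε)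
    (g : ℝ → ℝ) (hg : g = fun s => if δ = 0 then s else (1 - Real.exp (-δ * s)) / δ)
    (θ : ℝ → ℝ → ℝ)
    (hθ : θ = fun t y => b / a + Δμ / (a * d) * (1 + ε / y * g (T - t))) :
    ∀ t y : ℝ, 0 ≤ t → t < T → 0 < y →
      deriv (fun y => θ t y) y < 0 ∧ deriv (fun t => θ t y) t < 0 := by
  intro t y _ htT hy
  obtain rfl : g = annuityFactor δ := hg
  subst hθ
  have hG : 0 < annuityFactor δ (T - t) := annuityFactor_pos (sub_pos.2 htT)
  constructor
  · have hderiv_y : HasDerivAt (fun y => b / a + Δμ / (a * d) * (1 + ε / y * annuityFactor δ (T - t)))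
        (-(Δμ / (a * d) * ε * annuityFactor δ (T - t) / y ^ 2)) y := by
      refine (((((hasDerivAt_inv hy.ne').const_mul ε).mul_const (annuityFactor δ (T - t))).const_add
        1).const_mul (Δμ / (a * d)) |>.const_add (b / a)).congr_deriv ?_
      field_simp
    rw [hderiv_y.deriv]
    exact neg_neg_of_pos (by positivity)
  · have hderiv_t : HasDerivAt (fun t => b / a + Δμ / (a * d) * (1 + ε / y * annuityFactor δ (T - t)))
        (-(Δμ / (a * d) * (ε / y) * exp (-δ * (T - t)))) t := by
      refine (((((hasDerivAt_annuityFactor δ (T - t)).comp_const_sub T t).const_mul (ε / y)).const_add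
        1).const_mul (Δμ / (a * d)) |>.const_add (b / a)).congr_deriv ?_
      ring
    rw [hderiv_t.deriv]
    exact neg_neg_of_pos (by positivity)

/-- For the first-order approximation
`θ̂(t,y) = b/a + (Δμ/(ad))[1 + (ε/y)(1 - e^{-δ(T-t)})/δ]`, both partial
derivatives `∂θ̂/∂y` and `∂θ̂/∂t` are negative for `0 ≤ t < T`, `y > 0`. -/
theorem stmt15 (a b Δμ d ε T δ : ℝ)
    (ha : 0 < a) (hb : 0 < b) (hΔμ : 0 < Δμ) (hd : 0 < d) (hε : 0 < ε)
    (g : ℝ → ℝ) (hg : g = fun s => if δ = 0 then s else (1 - Real.exp (-δ * s)) / δ)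
    (θ : ℝ → ℝ → ℝ)
    (hθ : θ = fun t y => b / a + Δμ / (a * d) * (1 + ε / y * g (T - t))) :
    ∀ t y : ℝ, 0 ≤ t → t < T → 0 < y →
      deriv (fun y => θ t y) y < 0 ∧ deriv (fun t => θ t y) t < 0 :=
  stmt15_general a b Δμ d ε T δ ha hΔμ hd hε g hg θ hθ
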